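/- Let X_1,…,X_n be nonempty sets, X := X_1 × ⋯ × X_n, 1 ≤ k ≤ n−1, and let P be a discrete probability measure on X. If Λ_k^n[P] = 0 (the zero measure), then Λ_{k+1}^n[P] = 0. -/
import Mathlib

open MeasureTheory

attribute [local instance] Classical.propDecidable

namespace IndepRBF

/-- A discrete signed measure built from a coefficient function supported in `s`. -/
noncomputable def dmOfFun {α : Type*} (s : Finset α) (c : α → ℝ) : α →₀ ℝ :=
  Finsupp.onFinset s (fun x => if x ∈ s then c x else 0)
    (fun x hx => by by_contra h; simp [h] at hx)

/-- Integral of a function against a discrete signed measure. -/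
noncomputable def dmInt {α : Type*} (μ : α →₀ ℝ) (f : α → ℝ) : ℝ :=
  ∑ x ∈ μ.support, μ x * f x

/-- Measure of a set under a discrete signed measure. -/
noncomputable def dmMeas {α : Type*} (μ : α →₀ ℝ) (A : Set α) : ℝ :=
  ∑ x ∈ μ.support, if x ∈ A then μ x else 0

/-- Total mass of a discrete signed measure. -/
noncomputable def dmTotal {α : Type*} (μ : α →₀ ℝ) : ℝ :=
  ∑ x ∈ μ.support, μ x

/-- A discrete probability measure. -/
def IsDiscProb {α : Type*} (P : α →₀ ℝ) : Prop :=
  (∀ x, 0 ≤ P x) ∧ dmTotal P = 1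

/-- Membership in `M_k(X)`: the measure of every product set with at least `n-k+1` full
factors vanishes. -/
def memMk {n : ℕ} {X : Fin n → Type*} (k : ℕ) (μ : (∀ i, X i) →₀ ℝ) : Prop :=
  ∀ A : ∀ i, Set (X i),
    n - k + 1 ≤ (Finset.univ.filter fun i => A i = (Set.univ : Set (X i))).card →
    dmMeas μ {x | ∀ i, x i ∈ A i} = 0

/-- Product of discrete signed measures. -/
noncomputable def dmPi {n : ℕ} {X : Fin n → Type*} (μ : ∀ i, X i →₀ ℝ) :
    (∀ i, X i) →₀ ℝ :=
  dmOfFun (Fintype.piFinset fun i => (μ i).support) (fun x => ∏ i, μ i (x i))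

/-- Coefficient (at the `F`-coordinates of `x`) of the marginal of `P` on the block `F`. -/
noncomputable def margCoef {n : ℕ} {X : Fin n → Type*} (P : (∀ i, X i) →₀ ℝ)
    (F : Finset (Fin n)) (x : ∀ i, X i) : ℝ :=
  ∑ y ∈ P.support, if ∀ i ∈ F, y i = x i then P y else 0

/-- A finite box containing the support of any product of marginals of `P`. -/
noncomputable def suppBox {n : ℕ} {X : Fin n → Type*} (P : (∀ i, X i) →₀ ℝ) :
    Finset (∀ i, X i) :=
  Fintype.piFinset fun i => P.support.image fun y => y i

/-- The one-dimensional marginal of `P` on coordinate `i`. -/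
noncomputable def marg1 {n : ℕ} {X : Fin n → Type*} (P : (∀ i, X i) →₀ ℝ) (i : Fin n) :
    X i →₀ ℝ :=
  dmOfFun (P.support.image fun y => y i)
    (fun a => ∑ y ∈ P.support, if y i = a then P y else 0)

/-- The product of the one-dimensional marginals `P_1 × ⋯ × P_n`. -/
noncomputable def prodMarg1 {n : ℕ} {X : Fin n → Type*} (P : (∀ i, X i) →₀ ℝ) :
    (∀ i, X i) →₀ ℝ :=
  dmPi fun i => marg1 P i

/-- The product measure `P_F × Q_{F^c}`, arranged on the coordinates of the product space. -/
noncomputable def pairTerm {n : ℕ} {X : Fin n → Type*} (P Q : (∀ i, X i) →₀ ℝ)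
    (F : Finset (Fin n)) : (∀ i, X i) →₀ ℝ :=
  dmOfFun (Fintype.piFinset fun i =>
      (P.support.image fun y => y i) ∪ (Q.support.image fun y => y i))
    (fun x => margCoef P F x * margCoef Q Fᶜ x)

/-- Generalized Lancaster interaction `Λ_k^n[P,Q]`. -/
noncomputable def genLanc {n : ℕ} {X : Fin n → Type*} (k : ℕ) (P Q : (∀ i, X i) →₀ ℝ) :
    (∀ i, X i) →₀ ℝ :=
  P + ∑ j ∈ Finset.range k,
    ((-1 : ℝ) ^ (k - j) * ((n - j - 1).choose (n - k) : ℝ)) •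
      ∑ F ∈ Finset.powersetCard j (Finset.univ : Finset (Fin n)), pairTerm P Q F

/-- The measure `P_F × ∏_{j ∈ F^c} P_j` arranged on the coordinates of the product space. -/
noncomputable def lancTermD {n : ℕ} {X : Fin n → Type*} (P : (∀ i, X i) →₀ ℝ)
    (F : Finset (Fin n)) : (∀ i, X i) →₀ ℝ :=
  dmOfFun (suppBox P) (fun x => margCoef P F x * ∏ j ∈ Fᶜ, margCoef P {j} x)

/-- Generalized Lancaster interaction `Λ_k^n[P] = P + Σ_j (−1)^{k−j} C(n−j−1,n−k)
Σ_{|F|=j} P_F × ∏_{i∈F^c} P_i`. -/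
noncomputable def genLancD {n : ℕ} {X : Fin n → Type*} (k : ℕ) (P : (∀ i, X i) →₀ ℝ) :
    (∀ i, X i) →₀ ℝ :=
  P + ∑ j ∈ Finset.range k,
    ((-1 : ℝ) ^ (k - j) * ((n - j - 1).choose (n - k) : ℝ)) •
      ∑ F ∈ Finset.powersetCard j (Finset.univ : Finset (Fin n)), lancTermD P F

/-- Lancaster interaction `Λ[P] = Σ_F (−1)^{n−|F|} P_F × ∏_{j∈F^c} P_j`. -/
noncomputable def lancaster {n : ℕ} {X : Fin n → Type*} (P : (∀ i, X i) →₀ ℝ) :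
    (∀ i, X i) →₀ ℝ :=
  ∑ F ∈ (Finset.univ : Finset (Fin n)).powerset,
    ((-1 : ℝ) ^ (n - F.card)) • lancTermD P F

/-- `π` is a partition of `{1,…,n}`. -/
def IsPartition {n : ℕ} (π : Finset (Finset (Fin n))) : Prop :=
  (∀ B ∈ π, B.Nonempty) ∧ (∀ B ∈ π, ∀ B' ∈ π, B ≠ B' → Disjoint B B') ∧
    ∀ i : Fin n, ∃ B ∈ π, i ∈ B

/-- The product of the marginals of `P` on the blocks of `π`, arranged on the coordinates of
the product space. -/
noncomputable def blockProd {n : ℕ} {X : Fin n → Type*} (P : (∀ i, X i) →₀ ℝ)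
    (π : Finset (Finset (Fin n))) : (∀ i, X i) →₀ ℝ :=
  dmOfFun (suppBox P) (fun x => ∏ B ∈ π, margCoef P B x)

/-- Streitberg interaction `Σ[P]`. -/
noncomputable def streitberg {n : ℕ} {X : Fin n → Type*} (P : (∀ i, X i) →₀ ℝ) :
    (∀ i, X i) →₀ ℝ :=
  ∑ π ∈ Finset.univ.filter (fun π : Finset (Finset (Fin n)) => IsPartition π),
    ((-1 : ℝ) ^ (π.card - 1) * ((π.card - 1).factorial : ℝ)) • blockProd P π

/-- The vector of squared distances `(‖u_1−v_1‖²,…,‖u_n−v_n‖²)`. -/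
noncomputable def sqDistVec {n d : ℕ} (u v : Fin n → EuclideanSpace ℝ (Fin d)) :
    Fin n → ℝ :=
  fun i => ‖u i - v i‖ ^ 2

/-- Double integral `∬ g(‖u_1−v_1‖²,…,‖u_n−v_n‖²) dμ(u) dμ(v)`. -/
noncomputable def dblInt {n d : ℕ} (μ : (Fin n → EuclideanSpace ℝ (Fin d)) →₀ ℝ)
    (g : (Fin n → ℝ) → ℝ) : ℝ :=
  dmInt μ fun u => dmInt μ fun v => g (sqDistVec u v)

/-- `g` is positive definite independent of order `k` in all Euclidean spaces. -/
def PDI (n k : ℕ) (g : (Fin n → ℝ) → ℝ) : Prop :=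
  ∀ d : ℕ, ∀ μ : (Fin n → EuclideanSpace ℝ (Fin d)) →₀ ℝ,
    memMk k μ → 0 ≤ (-1 : ℝ) ^ k * dblInt μ g

/-- `g` is strictly positive definite independent of order `k` in all Euclidean spaces. -/
def SPDI (n k : ℕ) (g : (Fin n → ℝ) → ℝ) : Prop :=
  PDI n k g ∧ ∀ d : ℕ, ∀ μ : (Fin n → EuclideanSpace ℝ (Fin d)) →₀ ℝ,
    memMk k μ → dblInt μ g = 0 → μ = 0

/-- The closed nonnegative orthant `[0,∞)^n`. -/
def Qset (n : ℕ) : Set (Fin n → ℝ) := {t | ∀ i, 0 ≤ t i}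

/-- The open positive orthant `(0,∞)^n`. -/
def posOrth (n : ℕ) : Set (Fin n → ℝ) := {t | ∀ i, 0 < t i}

/-- The number of strictly positive coordinates of `t`. -/
noncomputable def posCount {n : ℕ} (t : Fin n → ℝ) : ℕ :=
  (Finset.univ.filter fun i => 0 < t i).card

/-- Partial derivative in the `i`-th coordinate. -/
noncomputable def pd {n : ℕ} (i : Fin n) (h : (Fin n → ℝ) → ℝ) : (Fin n → ℝ) → ℝ :=
  fun t => deriv (fun s => h (Function.update t i s)) (t i)

/-- Iterated partial derivative `∂^α`. -/
noncomputable def pdMulti {n : ℕ} (α : Fin n → ℕ) (h : (Fin n → ℝ) → ℝ) :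
    (Fin n → ℝ) → ℝ :=
  (List.finRange n).foldr (fun i k => (pd i)^[α i] k) h

/-- `h` is completely monotone in `n` variables on `(0,∞)^n`. -/
def CompMonoOn (n : ℕ) (h : (Fin n → ℝ) → ℝ) : Prop :=
  ContDiffOn ℝ (⊤ : ℕ∞) h (posOrth n) ∧
    ∀ α : Fin n → ℕ, ∀ t ∈ posOrth n,
      0 ≤ (-1 : ℝ) ^ (∑ i, α i) * pdMulti α h t

/-- `g` is a Bernstein function of order `k` in `(0,∞)^n`. -/
def BernsteinOrder (n k : ℕ) (g : (Fin n → ℝ) → ℝ) : Prop :=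
  ContDiffOn ℝ (⊤ : ℕ∞) g (posOrth n) ∧
    ∀ F : Finset (Fin n), F.card = k →
      CompMonoOn n (pdMulti (fun i => if i ∈ F then 1 else 0) g)

/-- Elementary symmetric polynomial `p_k^n`. -/
noncomputable def esymm {n : ℕ} (k : ℕ) (r : Fin n → ℝ) : ℝ :=
  ∑ F ∈ Finset.powersetCard k (Finset.univ : Finset (Fin n)), ∏ i ∈ F, r i

/-- `H_k^n(r) = p_n^n(r) + Σ_{j<k} (−1)^{k−j} C(n−j−1,n−k) p_j^n(r)`. -/
noncomputable def Hkn {n : ℕ} (k : ℕ) (r : Fin n → ℝ) : ℝ :=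
  esymm n r + ∑ j ∈ Finset.range k,
    (-1 : ℝ) ^ (k - j) * ((n - j - 1).choose (n - k) : ℝ) * esymm j r

/-- `E_k^n(s) = H_k^n(e^{−s_1},…,e^{−s_n})`. -/
noncomputable def Ekn {n : ℕ} (k : ℕ) (s : Fin n → ℝ) : ℝ :=
  Hkn k fun i => Real.exp (-(s i))

/-- `φ(r,t) = (1−e^{−rt})(1+r)/r` for `r > 0`, and `φ(0,t) = t`. -/
noncomputable def phi (r t : ℝ) : ℝ :=
  if r = 0 then t else (1 - Real.exp (-(r * t))) * (1 + r) / r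

/-- The vector `t_F ∈ [0,∞)^k` of the coordinates of `t` indexed by `F` (in increasing
order of indices); junk values if `F.card ≠ k`. -/
noncomputable def restrF {n : ℕ} (k : ℕ) (F : Finset (Fin n)) (t : Fin n → ℝ) :
    Fin k → ℝ :=
  fun j => ((F.sort (· ≤ ·)).map t).getD j.val 0

/-- The integral representation of Bernstein functions of order `n` in `n` variables. -/
def RepN (n : ℕ) (g : (Fin n → ℝ) → ℝ) (η : Measure (Fin n → ℝ)) : Prop :=
  IsFiniteMeasure η ∧ η {r | ¬ ∀ i, 0 ≤ r i} = 0 ∧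
    ∀ t ∈ Qset n, g t = ∫ r, ∏ i, phi (r i) (t i) ∂η

/-- The integral representation of Bernstein functions of order `k` in `n` variables. -/
def RepK (n k : ℕ) (g : (Fin n → ℝ) → ℝ)
    (ψ : Finset (Fin n) → (Fin k → ℝ) → ℝ) (η : Measure (Fin n → ℝ)) : Prop :=
  (∀ F : Finset (Fin n), F.card = k →
      ContinuousOn (ψ F) (Qset k) ∧ BernsteinOrder k k (ψ F) ∧
        ∀ u ∈ Qset k, posCount u < k → ψ F u = 0) ∧
  IsFiniteMeasure η ∧
  η {r | ¬ ((∀ i, 0 ≤ r i) ∧ k < posCount r)} = 0 ∧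
  ∀ t ∈ Qset n,
    g t = (∑ F ∈ Finset.powersetCard k (Finset.univ : Finset (Fin n)),
        ψ F (restrF k F t)) +
      ∫ r, (-1 : ℝ) ^ k * Ekn k (fun i => r i * t i) *
        esymm k (fun i => 1 + r i) / esymm k r ∂η

section Comb
open Finset

lemma diffD (a : ℕ) (g : ℕ → ℝ) :
    ∑ i ∈ range (a+2), (-1:ℝ)^i * (a+1).choose i * g i
      = ∑ i ∈ range (a+1), (-1:ℝ)^i * a.choose i * (g i - g (i+1)) := by
  rw [Finset.sum_range_succ' (fun i => (-1:ℝ)^i * ((a+1).choose i) * g i)]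
  have h1 : ∀ i ∈ range (a+1), ((-1:ℝ))^(i+1) * (((a+1).choose (i+1) : ℕ) : ℝ) * g (i+1)
      = (-1)^i * (a.choose i : ℝ) * (0 - g (i+1)) + ((-1)^(i+1) * ((a.choose (i+1) : ℕ) : ℝ) * g (i+1)) := by
    intro i _; rw [Nat.choose_succ_succ]; push_cast; ring
  rw [Finset.sum_congr rfl h1, Finset.sum_add_distrib]
  have h2 : ∑ i ∈ range (a+1), ((-1:ℝ)^(i+1) * ((a.choose (i+1) : ℕ) : ℝ) * g (i+1))
      = ∑ i ∈ range (a+2), ((-1:ℝ)^i * (a.choose i : ℝ) * g i) - (-1:ℝ)^0 * ((a.choose 0 : ℕ) : ℝ) * g 0 := by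
    rw [Finset.sum_range_succ' (fun i => (-1:ℝ)^i * ((a.choose i : ℕ) : ℝ) * g i)]; ring
  rw [h2, Finset.sum_range_succ (fun i => (-1:ℝ)^i * ((a.choose i : ℕ):ℝ) * g i)]
  have hz : ((a.choose (a+1) : ℕ) : ℝ) = 0 := by
    rw [Nat.choose_eq_zero_of_lt (by omega)]; simp
  rw [hz]
  rw [show (∑ i ∈ range (a+1), (-1:ℝ)^i * (a.choose i : ℝ) * (g i - g (i+1)))
      = ∑ i ∈ range (a+1), ((-1:ℝ)^i * (a.choose i : ℝ) * (0 - g (i+1)) + (-1:ℝ)^i * (a.choose i : ℝ) * g i)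
      from Finset.sum_congr rfl (fun i _ => by ring), Finset.sum_add_distrib]
  simp [Nat.choose_zero_right]; ring

lemma Zlem : ∀ a c : ℕ, a + 1 ≤ c →
    ∑ i ∈ range (a+2), (-1:ℝ)^i * (a+1).choose i * ((c - i).choose a : ℝ) = 0 := by
  intro a
  induction a with
  | zero => intro c hc; simp [Finset.sum_range_succ]
  | succ a ih =>
      intro c hc
      rw [show a+1+2 = (a+1)+2 from rfl, diffD (a+1) (fun i => ((c - i).choose (a+1) : ℝ))]
      have h1 : ∀ i ∈ range (a+2), (-1:ℝ)^i * (a+1).choose i *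
          (((c - i).choose (a+1) : ℝ) - ((c - (i+1)).choose (a+1) : ℝ))
          = (-1:ℝ)^i * (a+1).choose i * (((c-1) - i).choose a : ℝ) := by
        intro i hi
        simp only [Finset.mem_range] at hi
        rw [show c - i = (c - 1 - i) + 1 from by omega, Nat.choose_succ_succ',
          show c - (i+1) = c - 1 - i from by omega]
        push_cast; ring
      rw [Finset.sum_congr rfl h1, ih (c-1) (by omega)]

lemma Ilem : ∀ a b : ℕ, 1 ≤ b →
    ∑ i ∈ range (a+1), (-1:ℝ)^i * a.choose i * ((a + b - 1 - i).choose a : ℝ) = 1 := by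
  intro a b
  induction b with
  | zero => omega
  | succ b ih =>
      intro _
      rcases Nat.eq_zero_or_pos b with hb | hb
      · subst hb
        rw [Finset.sum_eq_single_of_mem 0 (by simp)]
        · simp
        · intro i hi hi0
          simp only [Finset.mem_range] at hi
          have : (a + 1 - 1 - i).choose a = 0 := Nat.choose_eq_zero_of_lt (by omega)
          rw [this]; push_cast; ring
      rcases Nat.eq_zero_or_pos a with ha | ha
      · subst ha; simp
      obtain ⟨a', rfl⟩ : ∃ a', a = a' + 1 := ⟨a - 1, by omega⟩
      have h1 : ∀ i ∈ range (a'+1+1), (-1:ℝ)^i * (a'+1).choose i * (((a'+1) + (b+1) - 1 - i).choose (a'+1) : ℝ)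
          = (-1:ℝ)^i * (a'+1).choose i * (((a'+1) + b - 1 - i).choose (a'+1) : ℝ)
            + (-1:ℝ)^i * (a'+1).choose i * (((a'+1+b-1) - i).choose a' : ℝ) := by
        intro i hi
        simp only [Finset.mem_range] at hi
        rw [show (a'+1) + (b+1) - 1 - i = ((a'+1) + b - 1 - i) + 1 from by omega,
          Nat.choose_succ_succ']
        push_cast; ring
      rw [Finset.sum_congr rfl h1, Finset.sum_add_distrib, ih hb,
        show a'+1+1 = a'+2 from rfl, Zlem a' (a'+1+b-1) (by omega)]
      ring

lemma trinom (a b i : ℕ) :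
    (a+b).choose i * ((a+b-i).choose b) = (a+b).choose b * a.choose i := by
  rcases le_or_gt i a with hia | hia
  · have h1 : (a+b-i).choose b * b.factorial * (a-i).factorial = (a+b-i).factorial := by
      have h := Nat.choose_mul_factorial_mul_factorial (show b ≤ a+b-i by omega)
      rwa [show a+b-i-b = a-i from by omega] at h
    have h2 : (a+b).choose i * i.factorial * (a+b-i).factorial = (a+b).factorial :=
      Nat.choose_mul_factorial_mul_factorial (by omega)
    have h3 : (a+b).choose b * b.factorial * a.factorial = (a+b).factorial := by
      have h := Nat.choose_mul_factorial_mul_factorial (show b ≤ a+b by omega)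
      rwa [show a+b-b = a from by omega] at h
    have h4 : a.choose i * i.factorial * (a-i).factorial = a.factorial :=
      Nat.choose_mul_factorial_mul_factorial hia
    have key : ((a+b).choose i * ((a+b-i).choose b)) * (i.factorial * (b.factorial * (a-i).factorial))
        = ((a+b).choose b * a.choose i) * (i.factorial * (b.factorial * (a-i).factorial)) := by
      calc ((a+b).choose i * ((a+b-i).choose b)) * (i.factorial * (b.factorial * (a-i).factorial))
          = ((a+b-i).choose b * b.factorial * (a-i).factorial) * ((a+b).choose i * i.factorial) := by ring
        _ = (a+b-i).factorial * ((a+b).choose i * i.factorial) := by rw [h1]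
        _ = (a+b).choose i * i.factorial * (a+b-i).factorial := by ring
        _ = (a+b).factorial := h2
        _ = (a+b).choose b * b.factorial * a.factorial := h3.symm
        _ = (a+b).choose b * b.factorial * (a.choose i * i.factorial * (a-i).factorial) := by rw [h4]
        _ = _ := by ring
    exact Nat.eq_of_mul_eq_mul_right (by positivity) key
  · rcases Nat.eq_zero_or_pos b with hb | hb
    · subst hb
      rw [Nat.choose_eq_zero_of_lt hia, show a + 0 = a from rfl,
        Nat.choose_eq_zero_of_lt hia]
      simp
    · rw [Nat.choose_eq_zero_of_lt hia, Nat.choose_eq_zero_of_lt (show a+b-i < b by omega)]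
      simp

lemma IlemB (a b : ℕ) (hb : 1 ≤ b) :
    ∑ i ∈ range b, (-1:ℝ)^i * a.choose i * ((a + b - 1 - i).choose a : ℝ) = 1 := by
  have vanish : ∀ i ∈ range (a+b), (b ≤ i ∨ a + 1 ≤ i) →
      (-1:ℝ)^i * a.choose i * ((a + b - 1 - i).choose a : ℝ) = 0 := by
    intro i hi hcase
    rcases le_or_gt i a with h1 | h1
    · have hbi : b ≤ i := by omega
      rw [Nat.choose_eq_zero_of_lt (show a + b - 1 - i < a by omega)]
      simp
    · rw [Nat.choose_eq_zero_of_lt h1]; simp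
  have e1 : ∑ i ∈ range b, (-1:ℝ)^i * a.choose i * ((a + b - 1 - i).choose a : ℝ)
      = ∑ i ∈ range (a+b), (-1:ℝ)^i * a.choose i * ((a + b - 1 - i).choose a : ℝ) :=
    Finset.sum_subset (Finset.range_subset_range.2 (by omega))
      (fun i hi hni => vanish i hi (Or.inl (by simpa [Finset.mem_range, not_lt] using hni)))
  have e2 : ∑ i ∈ range (a+1), (-1:ℝ)^i * a.choose i * ((a + b - 1 - i).choose a : ℝ)
      = ∑ i ∈ range (a+b), (-1:ℝ)^i * a.choose i * ((a + b - 1 - i).choose a : ℝ) :=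
    Finset.sum_subset (Finset.range_subset_range.2 (by omega))
      (fun i hi hni => vanish i hi (Or.inr (by simpa [Finset.mem_range, not_lt] using hni)))
  rw [e1, ← e2, Ilem a b hb]

lemma IDm (n k m : ℕ) (hk1 : 1 ≤ k) (hkn : k + 1 ≤ n) (hm : m < k) :
    ∑ j ∈ Ico m k, ((-1:ℝ)^(k-j) * ((n-j-1).choose (n-k) : ℝ)) * ((n-m).choose (j-m) : ℝ) * ((n-j).choose (k-m) : ℝ)
      = (-1:ℝ)^(k-m) * ((n-m).choose (n-k) : ℝ) := by
  rw [Finset.sum_Ico_eq_sum_range]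
  have hb1 : 1 ≤ k - m := by omega
  have step : ∀ i ∈ range (k - m),
      ((-1:ℝ)^(k-(m+i)) * ((n-(m+i)-1).choose (n-k) : ℝ)) * ((n-m).choose ((m+i)-m) : ℝ) * ((n-(m+i)).choose (k-m) : ℝ)
      = ((-1:ℝ)^(k-m) * (((n-m).choose (n-k)) : ℝ)) * ((-1:ℝ)^i * ((n-k).choose i : ℝ) * ((((n-k)+(k-m)-1-i).choose (n-k)) : ℝ)) := by
    intro i hi; simp only [Finset.mem_range] at hi
    have e1 : (m+i)-m = i := by omega
    have e2 : n-(m+i) = (n-k)+(k-m)-i := by omega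
    have e3 : n-(m+i)-1 = (n-k)+(k-m)-1-i := by omega
    have e4 : k-(m+i) = (k-m)-i := by omega
    have e5 : n-m = (n-k)+(k-m) := by omega
    rw [e1, e3, e2, e4, e5]
    have tri := trinom (n-k) (k-m) i
    have sy : ((n-k)+(k-m)).choose (n-k) = ((n-k)+(k-m)).choose (k-m) := by
      rw [← Nat.choose_symm (show (k-m) ≤ (n-k)+(k-m) by omega),
        show (n-k)+(k-m)-(k-m) = n-k from by omega]
    have sq : (-1:ℝ)^i * (-1:ℝ)^i = 1 := by
      rw [← pow_add, show i+i = 2*i from by omega, pow_mul]; norm_num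
    have sgn : (-1:ℝ)^((k-m)-i) * (-1:ℝ)^i = (-1:ℝ)^(k-m) := by
      rw [← pow_add]; congr 1; omega
    have sgn' : (-1:ℝ)^((k-m)-i) = (-1:ℝ)^(k-m) * (-1:ℝ)^i := by
      calc (-1:ℝ)^((k-m)-i) = (-1:ℝ)^((k-m)-i) * ((-1:ℝ)^i * (-1:ℝ)^i) := by rw [sq, mul_one]
        _ = ((-1:ℝ)^((k-m)-i) * (-1:ℝ)^i) * (-1:ℝ)^i := by ring
        _ = _ := by rw [sgn]
    rw [sgn', sy]
    have tri' : (((n-k)+(k-m)).choose i : ℝ) * ((((n-k)+(k-m)-i).choose (k-m)) : ℝ)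
        = ((((n-k)+(k-m)).choose (k-m)) : ℝ) * (((n-k).choose i) : ℝ) := by
      exact_mod_cast congrArg (Nat.cast : ℕ → ℝ) tri
    linear_combination ((-1:ℝ)^(k-m) * (-1:ℝ)^i * ((((n-k)+(k-m)-1-i).choose (n-k)) : ℝ)) * tri'
  rw [Finset.sum_congr rfl step, ← Finset.mul_sum, IlemB (n-k) (k-m) hb1, mul_one]

lemma card_fiber {n : ℕ} (k : ℕ) (F E : Finset (Fin n))
    (hE : E ⊆ F) (hEk : E.card ≤ k) :
    ((Finset.powersetCard k (Finset.univ : Finset (Fin n))).filter (fun G => F ∩ G = E)).card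
      = (Fintype.card (Fin n) - F.card).choose (k - E.card) := by
  classical
  rw [← Finset.card_compl F, ← Finset.card_powersetCard]
  apply Finset.card_bij' (fun G _ => G \ E) (fun H _ => E ∪ H)
  · intro G hG
    simp only [Finset.mem_filter, Finset.mem_powersetCard_univ] at hG
    obtain ⟨hGk, hFG⟩ := hG
    have hEG : E ⊆ G := by rw [← hFG]; exact Finset.inter_subset_right
    rw [Finset.mem_powersetCard]
    constructor
    · intro x hx
      simp only [Finset.mem_sdiff] at hx
      simp only [Finset.mem_compl]
      intro hxF
      exact hx.2 (by rw [← hFG]; exact Finset.mem_inter.2 ⟨hxF, hx.1⟩)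
    · rw [Finset.card_sdiff_of_subset hEG, hGk]
  · intro H hH
    rw [Finset.mem_powersetCard] at hH
    obtain ⟨hHc, hHcard⟩ := hH
    have hdisj : Disjoint E H := by
      apply Finset.disjoint_left.2
      intro x hxE hxH
      exact (Finset.mem_compl.1 (hHc hxH)) (hE hxE)
    have hdisjF : Disjoint F H := by
      apply Finset.disjoint_left.2
      intro x hxF hxH
      exact (Finset.mem_compl.1 (hHc hxH)) hxF
    simp only [Finset.mem_filter, Finset.mem_powersetCard_univ]
    constructor
    · rw [Finset.card_union_of_disjoint hdisj, hHcard]; omega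
    · rw [Finset.inter_union_distrib_left, Finset.inter_eq_right.2 hE,
        (Finset.disjoint_iff_inter_eq_empty.1 hdisjF)]
      simp
  · intro G hG
    simp only [Finset.mem_filter, Finset.mem_powersetCard_univ] at hG
    have hEG : E ⊆ G := by rw [← hG.2]; exact Finset.inter_subset_right
    exact Finset.union_sdiff_of_subset hEG
  · intro H hH
    rw [Finset.mem_powersetCard] at hH
    have hdisj : Disjoint E H := by
      apply Finset.disjoint_left.2
      intro x hxE hxH
      exact (Finset.mem_compl.1 (hH.1 hxH)) (hE hxE)
    exact Finset.union_sdiff_cancel_left hdisj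

lemma card_supersets {n : ℕ} (j : ℕ) (E : Finset (Fin n)) (hEj : E.card ≤ j) :
    ((Finset.powersetCard j (Finset.univ : Finset (Fin n))).filter (fun F => E ⊆ F)).card
      = (Fintype.card (Fin n) - E.card).choose (j - E.card) := by
  classical
  rw [← Finset.card_compl E, ← Finset.card_powersetCard]
  apply Finset.card_bij' (fun F _ => F \ E) (fun H _ => E ∪ H)
  · intro F hF
    simp only [Finset.mem_filter, Finset.mem_powersetCard_univ] at hF
    rw [Finset.mem_powersetCard]
    exact ⟨fun x hx => Finset.mem_compl.2 (Finset.mem_sdiff.1 hx).2,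
      by rw [Finset.card_sdiff_of_subset hF.2, hF.1]⟩
  · intro H hH
    rw [Finset.mem_powersetCard] at hH
    have hdisj : Disjoint E H := by
      apply Finset.disjoint_left.2
      intro x hxE hxH
      exact (Finset.mem_compl.1 (hH.1 hxH)) hxE
    simp only [Finset.mem_filter, Finset.mem_powersetCard_univ]
    refine ⟨?_, Finset.subset_union_left⟩
    rw [Finset.card_union_of_disjoint hdisj, hH.2]; omega
  · intro F hF
    simp only [Finset.mem_filter, Finset.mem_powersetCard_univ] at hF
    exact Finset.union_sdiff_of_subset hF.2
  · intro H hH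
    rw [Finset.mem_powersetCard] at hH
    have hdisj : Disjoint E H := by
      apply Finset.disjoint_left.2
      intro x hxE hxH
      exact (Finset.mem_compl.1 (hH.1 hxH)) hxE
    exact Finset.union_sdiff_cancel_left hdisj

lemma CL1 {n : ℕ} (k : ℕ) (F : Finset (Fin n)) (hFk : F.card ≤ k) (f : Finset (Fin n) → ℝ) :
    ∑ G ∈ Finset.powersetCard k (Finset.univ : Finset (Fin n)), f (F ∩ G)
      = ∑ E ∈ F.powerset, ((Fintype.card (Fin n) - F.card).choose (k - E.card) : ℝ) * f E := by
  classical
  have h1 := Finset.sum_fiberwise_eq_sum_filter (Finset.powersetCard k (Finset.univ : Finset (Fin n)))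
    F.powerset (fun G => F ∩ G) (fun G => f (F ∩ G))
  rw [Finset.filter_true_of_mem (fun G _ => Finset.mem_powerset.2 Finset.inter_subset_left)] at h1
  rw [← h1]
  apply Finset.sum_congr rfl
  intro E hE
  rw [Finset.mem_powerset] at hE
  have hcongr : ∀ G ∈ (Finset.powersetCard k (Finset.univ : Finset (Fin n))).filter (fun G => F ∩ G = E),
      f (F ∩ G) = f E := fun G hG => by rw [(Finset.mem_filter.1 hG).2]
  rw [Finset.sum_congr rfl hcongr, Finset.sum_const,
    card_fiber k F E hE (le_trans (Finset.card_le_card hE) hFk), nsmul_eq_mul]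

lemma CL2 {n : ℕ} (j : ℕ) (φ : Finset (Fin n) → ℝ) :
    ∑ F ∈ Finset.powersetCard j (Finset.univ : Finset (Fin n)), ∑ E ∈ F.powerset, φ E
      = ∑ m ∈ range (j+1), ((Fintype.card (Fin n) - m).choose (j - m) : ℝ) *
          ∑ E ∈ Finset.powersetCard m (Finset.univ : Finset (Fin n)), φ E := by
  classical
  have h1 : ∀ F ∈ Finset.powersetCard j (Finset.univ : Finset (Fin n)),
      ∑ E ∈ F.powerset, φ E = ∑ m ∈ range (j+1), ∑ E ∈ Finset.powersetCard m F, φ E := by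
    intro F hF
    rw [Finset.sum_powerset, Finset.mem_powersetCard_univ.1 hF]
  rw [Finset.sum_congr rfl h1, Finset.sum_comm]
  apply Finset.sum_congr rfl
  intro m hm
  simp only [Finset.mem_range] at hm
  have h2 : ∀ F ∈ Finset.powersetCard j (Finset.univ : Finset (Fin n)), ∑ E ∈ Finset.powersetCard m F, φ E
      = ∑ E ∈ Finset.powersetCard m (Finset.univ : Finset (Fin n)), if E ⊆ F then φ E else 0 := by
    intro F hF
    rw [← Finset.sum_filter]
    apply Finset.sum_congr _ (fun _ _ => rfl)
    ext E
    simp only [Finset.mem_powersetCard, Finset.mem_filter, Finset.mem_powersetCard_univ]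
    have : E ⊆ Finset.univ := Finset.subset_univ E
    tauto
  rw [Finset.sum_congr rfl h2, Finset.sum_comm, Finset.mul_sum]
  apply Finset.sum_congr rfl
  intro E hE
  rw [← Finset.sum_filter, Finset.sum_const, nsmul_eq_mul,
    card_supersets j E (by rw [Finset.mem_powersetCard_univ.1 hE]; omega),
    Finset.mem_powersetCard_univ.1 hE]

lemma tri_swap (K : ℕ) (g : ℕ → ℕ → ℝ) :
    ∑ j ∈ range K, ∑ m ∈ range (j+1), g j m = ∑ m ∈ range K, ∑ j ∈ Ico m K, g j m := by
  have h1 : ∀ j ∈ range K, ∑ m ∈ range (j+1), g j m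
      = ∑ m ∈ range K, if m ≤ j then g j m else 0 := by
    intro j hj; simp only [Finset.mem_range] at hj
    calc ∑ m ∈ range (j+1), g j m = ∑ m ∈ range (j+1), (if m ≤ j then g j m else 0) :=
          Finset.sum_congr rfl (fun m hm => by
            simp only [Finset.mem_range] at hm; rw [if_pos (by omega)])
      _ = ∑ m ∈ range K, (if m ≤ j then g j m else 0) :=
          Finset.sum_subset (Finset.range_subset_range.2 (by omega)) (fun m hm hnm => by
            simp only [Finset.mem_range] at hm hnm; rw [if_neg (by omega)])
  rw [Finset.sum_congr rfl h1, Finset.sum_comm]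
  apply Finset.sum_congr rfl
  intro m hm
  rw [← Finset.sum_filter]
  apply Finset.sum_congr _ (fun _ _ => rfl)
  ext j; simp only [Finset.mem_filter, Finset.mem_range, Finset.mem_Ico]
  omega

lemma core {n : ℕ} (k : ℕ) (hk1 : 1 ≤ k) (hkn : k + 1 ≤ n) (f : Finset (Fin n) → ℝ) :
    (- ∑ j ∈ range k, ((-1:ℝ)^(k-j) * ((n-j-1).choose (n-k) : ℝ)) *
        ∑ F ∈ Finset.powersetCard j (Finset.univ : Finset (Fin n)),
          ∑ G ∈ Finset.powersetCard k (Finset.univ : Finset (Fin n)), f (F ∩ G))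
      = ∑ j ∈ range k, (((-1:ℝ)^(k+1-j) * ((n-j-1).choose (n-(k+1)) : ℝ))
            - ((-1:ℝ)^(k-j) * ((n-j-1).choose (n-k) : ℝ))) *
          ∑ F ∈ Finset.powersetCard j (Finset.univ : Finset (Fin n)), f F := by
  classical
  have hstep : ∀ j ∈ range k,
      ((-1:ℝ)^(k-j) * ((n-j-1).choose (n-k) : ℝ)) *
        ∑ F ∈ Finset.powersetCard j (Finset.univ : Finset (Fin n)),
          ∑ G ∈ Finset.powersetCard k (Finset.univ : Finset (Fin n)), f (F ∩ G)
      = ∑ m ∈ range (j+1), ((-1:ℝ)^(k-j) * ((n-j-1).choose (n-k) : ℝ)) *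
          (((n-m).choose (j-m) : ℝ) * (((n-j).choose (k-m) : ℝ) *
            ∑ E ∈ Finset.powersetCard m (Finset.univ : Finset (Fin n)), f E)) := by
    intro j hj; simp only [Finset.mem_range] at hj
    have h1 : ∀ F ∈ Finset.powersetCard j (Finset.univ : Finset (Fin n)),
        ∑ G ∈ Finset.powersetCard k (Finset.univ : Finset (Fin n)), f (F ∩ G)
        = ∑ E ∈ F.powerset, (((n-j).choose (k - E.card) : ℕ) : ℝ) * f E := by
      intro F hF
      have hFc := Finset.mem_powersetCard_univ.1 hF
      rw [CL1 k F (by omega) f]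
      exact Finset.sum_congr rfl (fun E _ => by rw [Fintype.card_fin, hFc])
    rw [Finset.sum_congr rfl h1, CL2 j (fun E => (((n-j).choose (k - E.card) : ℕ) : ℝ) * f E)]
    rw [Finset.mul_sum]
    apply Finset.sum_congr rfl
    intro m hm
    have h2 : ∑ E ∈ Finset.powersetCard m (Finset.univ : Finset (Fin n)),
          (((n-j).choose (k - E.card) : ℕ) : ℝ) * f E
        = (((n-j).choose (k-m) : ℕ) : ℝ) *
            ∑ E ∈ Finset.powersetCard m (Finset.univ : Finset (Fin n)), f E := by
      rw [Finset.mul_sum]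
      exact Finset.sum_congr rfl (fun E hE => by rw [Finset.mem_powersetCard_univ.1 hE])
    rw [h2, Fintype.card_fin]
  rw [Finset.sum_congr rfl hstep,
    tri_swap k (fun j m => ((-1:ℝ)^(k-j) * ((n-j-1).choose (n-k):ℝ)) *
      (((n-m).choose (j-m):ℝ) * (((n-j).choose (k-m):ℝ) *
        ∑ E ∈ Finset.powersetCard m (Finset.univ:Finset (Fin n)), f E))),
    ← Finset.sum_neg_distrib]
  apply Finset.sum_congr rfl
  intro m hm; simp only [Finset.mem_range] at hm
  have h3 : ∑ j ∈ Ico m k, ((-1:ℝ)^(k-j) * ((n-j-1).choose (n-k):ℝ)) *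
        (((n-m).choose (j-m):ℝ) * (((n-j).choose (k-m):ℝ) *
          ∑ E ∈ Finset.powersetCard m (Finset.univ:Finset (Fin n)), f E))
      = (∑ j ∈ Ico m k, ((-1:ℝ)^(k-j) * ((n-j-1).choose (n-k):ℝ)) *
          ((n-m).choose (j-m):ℝ) * ((n-j).choose (k-m):ℝ)) *
        ∑ E ∈ Finset.powersetCard m (Finset.univ:Finset (Fin n)), f E := by
    rw [Finset.sum_mul]; exact Finset.sum_congr rfl (fun j _ => by ring)
  rw [h3, IDm n k m hk1 hkn hm]
  have pas : (n-m).choose (n-k) = (n-m-1).choose (n-k-1) + (n-m-1).choose (n-k) := by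
    have h := Nat.choose_succ_succ' (n-m-1) (n-k-1)
    rw [show n-m-1+1 = n-m from by omega, show n-k-1+1 = n-k from by omega] at h
    exact h
  have hnk : n - (k+1) = n - k - 1 := by omega
  have hsgn : (-1:ℝ)^(k+1-m) = -((-1:ℝ)^(k-m)) := by
    rw [show k+1-m = (k-m)+1 from by omega, pow_succ]; ring
  rw [hnk, hsgn, pas]
  push_cast
  ring

end Comb
section Machinery
open Finset

variable {n : ℕ} {X : Fin n → Type*}

lemma dmOfFun_apply {α : Type*} (s : Finset α) (c : α → ℝ) (x : α) :
    dmOfFun s c x = if x ∈ s then c x else 0 := rfl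

lemma margCoef_eq_sum_subset (μ : (∀ i, X i) →₀ ℝ) {s : Finset (∀ i, X i)} (hs : μ.support ⊆ s)
    (F : Finset (Fin n)) (x : ∀ i, X i) :
    margCoef μ F x = ∑ y ∈ s, if (∀ i ∈ F, y i = x i) then μ y else 0 := by
  unfold margCoef
  exact Finset.sum_subset hs (fun y _ hy => by simp [Finsupp.notMem_support_iff.1 hy])

lemma margCoef_dmOfFun (s : Finset (∀ i, X i)) (c : (∀ i, X i) → ℝ) (F : Finset (Fin n))
    (x : ∀ i, X i) :
    margCoef (dmOfFun s c) F x = ∑ y ∈ s, if (∀ i ∈ F, y i = x i) then c y else 0 := by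
  rw [margCoef_eq_sum_subset (dmOfFun s c) Finsupp.support_onFinset_subset F x]
  exact Finset.sum_congr rfl (fun y hy => by rw [dmOfFun_apply, if_pos hy])

lemma margCoef_sum_eq (μ : (∀ i, X i) →₀ ℝ) (F : Finset (Fin n)) (x : ∀ i, X i) :
    margCoef μ F x = μ.sum (fun y v => if (∀ i ∈ F, y i = x i) then v else 0) := by
  unfold margCoef Finsupp.sum
  rfl

lemma margCoef_add (μ ν : (∀ i, X i) →₀ ℝ) (F : Finset (Fin n)) (x : ∀ i, X i) :
    margCoef (μ + ν) F x = margCoef μ F x + margCoef ν F x := by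
  rw [margCoef_sum_eq, margCoef_sum_eq, margCoef_sum_eq]
  apply Finsupp.sum_add_index'
  · intro y; simp
  · intro y v w; split <;> simp

lemma margCoef_smul (r : ℝ) (μ : (∀ i, X i) →₀ ℝ) (F : Finset (Fin n)) (x : ∀ i, X i) :
    margCoef (r • μ) F x = r * margCoef μ F x := by
  rw [margCoef_sum_eq, margCoef_sum_eq]
  rw [Finsupp.sum_smul_index' (fun y => by simp)]
  rw [Finsupp.mul_sum]
  apply Finsupp.sum_congr
  intro y _
  split <;> simp

lemma margCoef_zero (F : Finset (Fin n)) (x : ∀ i, X i) :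
    margCoef (0 : (∀ i, X i) →₀ ℝ) F x = 0 := by
  simp [margCoef]

lemma margCoef_finset_sum {ι : Type*} (s : Finset ι) (μ : ι → ((∀ i, X i) →₀ ℝ))
    (F : Finset (Fin n)) (x : ∀ i, X i) :
    margCoef (∑ i ∈ s, μ i) F x = ∑ i ∈ s, margCoef (μ i) F x := by
  classical
  induction s using Finset.cons_induction with
  | empty => simp [margCoef_zero]
  | cons i s hi ih => rw [Finset.sum_cons, Finset.sum_cons, margCoef_add, ih]

lemma margCoef_univ (μ : (∀ i, X i) →₀ ℝ) (x : ∀ i, X i) :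
    margCoef μ (Finset.univ : Finset (Fin n)) x = μ x := by
  unfold margCoef
  have hiff : ∀ y : ∀ i, X i, (∀ i ∈ (Finset.univ : Finset (Fin n)), y i = x i) ↔ y = x := by
    intro y
    constructor
    · intro h; funext i; exact h i (Finset.mem_univ i)
    · intro h i _; rw [h]
  rw [Finset.sum_congr rfl (fun y _ => if_congr (hiff y) rfl rfl)]
  rw [Finset.sum_ite_eq' μ.support x (fun y => μ y)]
  split
  · rfl
  · exact (Finsupp.notMem_support_iff.1 ‹_›).symm

variable (P : (∀ i, X i) →₀ ℝ)

lemma marg1_apply (i : Fin n) (a : X i) :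
    marg1 P i a = ∑ y ∈ P.support, if y i = a then P y else 0 := by
  rw [marg1, dmOfFun_apply]
  split
  · rfl
  · rename_i h
    symm; apply Finset.sum_eq_zero
    intro y hy
    rw [if_neg]
    intro hya
    exact h (Finset.mem_image.2 ⟨y, hy, hya⟩)

lemma q_eq (i : Fin n) (x : ∀ i, X i) :
    margCoef P {i} x = marg1 P i (x i) := by
  rw [marg1_apply]
  unfold margCoef
  exact Finset.sum_congr rfl (fun y _ => if_congr (by simp) rfl rfl)

lemma marg1_off (i : Fin n) (a : X i) (h : a ∉ P.support.image (fun y => y i)) :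
    marg1 P i a = 0 := by
  rw [marg1, dmOfFun_apply, if_neg h]

lemma marg1_sum_one (hP : dmTotal P = 1) (i : Fin n) {t : Finset (X i)}
    (ht : P.support.image (fun y => y i) ⊆ t) :
    ∑ a ∈ t, marg1 P i a = 1 := by
  rw [Finset.sum_congr rfl (fun a _ => marg1_apply P i a), Finset.sum_comm]
  have h2 : ∀ y ∈ P.support, (∑ a ∈ t, if y i = a then P y else 0) = P y := by
    intro y hy
    rw [Finset.sum_congr rfl (fun a _ => if_congr eq_comm rfl rfl),
      Finset.sum_ite_eq' t (y i) (fun _ => P y),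
      if_pos (ht (Finset.mem_image_of_mem _ hy))]
  rw [Finset.sum_congr rfl h2]
  exact hP

lemma marg1_support_sum (hP : dmTotal P = 1) (i : Fin n) :
    ∑ a ∈ (marg1 P i).support, marg1 P i a = 1 := by
  rw [Finset.sum_subset (Finset.subset_union_left :
      (marg1 P i).support ⊆ (marg1 P i).support ∪ P.support.image (fun y => y i))
    (fun a _ ha => Finsupp.notMem_support_iff.1 ha)]
  exact marg1_sum_one P hP i Finset.subset_union_right

lemma margCoef_prodMarg1 (hP : dmTotal P = 1) (S : Finset (Fin n)) (z : ∀ i, X i) :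
    margCoef (prodMarg1 P) S z = ∏ i ∈ S, marg1 P i (z i) := by
  rw [show prodMarg1 P = dmOfFun (Fintype.piFinset fun i => (marg1 P i).support)
      (fun x => ∏ i, marg1 P i (x i)) from rfl]
  rw [margCoef_dmOfFun]
  have step : ∀ y : ∀ i, X i, (if (∀ i ∈ S, y i = z i) then ∏ i, marg1 P i (y i) else 0)
      = ∏ i, (if i ∈ S then (if y i = z i then marg1 P i (y i) else 0) else marg1 P i (y i)) := by
    intro y
    by_cases h : ∀ i ∈ S, y i = z i
    · rw [if_pos h]
      apply Finset.prod_congr rfl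
      intro i _
      by_cases hiS : i ∈ S
      · rw [if_pos hiS, if_pos (h i hiS)]
      · rw [if_neg hiS]
    · rw [if_neg h]
      push_neg at h
      obtain ⟨i0, hi0S, hi0⟩ := h
      exact (Finset.prod_eq_zero (Finset.mem_univ i0)
        (by rw [if_pos hi0S, if_neg hi0])).symm
  rw [Finset.sum_congr rfl (fun y _ => step y),
    ← Finset.prod_univ_sum (fun i => (marg1 P i).support)
      (fun i a => if i ∈ S then (if a = z i then marg1 P i a else 0) else marg1 P i a)]
  have ev : ∀ i, (∑ a ∈ (marg1 P i).support,
        if i ∈ S then (if a = z i then marg1 P i a else 0) else marg1 P i a)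
      = if i ∈ S then marg1 P i (z i) else 1 := by
    intro i
    by_cases hiS : i ∈ S
    · simp only [if_pos hiS]
      rw [Finset.sum_ite_eq' ((marg1 P i).support) (z i) (fun a => marg1 P i a)]
      split
      · rfl
      · exact (Finsupp.notMem_support_iff.1 ‹_›).symm
    · simp only [if_neg hiS]
      exact marg1_support_sum P hP i
  rw [Finset.prod_congr rfl (fun i _ => ev i), Finset.prod_ite_mem, Finset.univ_inter]

end Machinery
section Machinery2
open Finset

variable {n : ℕ} {X : Fin n → Type*} (P : (∀ i, X i) →₀ ℝ)

lemma margCoef_pairTerm (hP : dmTotal P = 1) (F G : Finset (Fin n)) (x : ∀ i, X i) :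
    margCoef (pairTerm P (prodMarg1 P) F) G x
      = margCoef P (F ∩ G) x * ∏ i ∈ G \ F, marg1 P i (x i) := by
  classical
  set D : ∀ i : Fin n, Finset (X i) := fun i =>
    (P.support.image fun y => y i) ∪ ((prodMarg1 P).support.image fun y => y i) with hD
  have hDP : ∀ i, (P.support.image fun y => y i) ⊆ D i := fun i => Finset.subset_union_left
  have hyD : ∀ y ∈ P.support, ∀ i, y i ∈ D i := fun y hy i => hDP i (Finset.mem_image_of_mem _ hy)
  have hm1D : ∀ (i : Fin n) (a : X i), a ∉ D i → marg1 P i a = 0 := fun i a ha =>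
    marg1_off P i a (fun h => ha (hDP i h))
  rw [show pairTerm P (prodMarg1 P) F = dmOfFun (Fintype.piFinset D)
      (fun z => margCoef P F z * margCoef (prodMarg1 P) Fᶜ z) from rfl, margCoef_dmOfFun]
  have step1 : ∀ z : ∀ i, X i,
      (if (∀ i ∈ G, z i = x i) then margCoef P F z * margCoef (prodMarg1 P) Fᶜ z else 0)
      = ∑ y ∈ P.support, (P y * ∏ i, (if ((i ∈ G → z i = x i) ∧ (i ∈ F → y i = z i))
          then (if i ∈ F then 1 else marg1 P i (z i)) else 0)) := by
    intro z
    rw [margCoef_prodMarg1 P hP]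
    rw [show margCoef P F z = ∑ y ∈ P.support, if (∀ i ∈ F, y i = z i) then P y else 0 from rfl]
    by_cases hG : ∀ i ∈ G, z i = x i
    · rw [if_pos hG, Finset.sum_mul]
      apply Finset.sum_congr rfl
      intro y _
      by_cases hF : ∀ i ∈ F, y i = z i
      · rw [if_pos hF]
        have hp : ∀ i : Fin n, (i ∈ G → z i = x i) ∧ (i ∈ F → y i = z i) :=
          fun i => ⟨fun h => hG i h, fun h => hF i h⟩
        rw [Finset.prod_congr rfl (fun i _ => if_pos (hp i))]
        congr 1
        rw [Finset.prod_congr rfl (fun i _ =>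
          show (if i ∈ F then (1:ℝ) else marg1 P i (z i))
            = (if i ∈ Fᶜ then marg1 P i (z i) else 1) from by
              by_cases h : i ∈ F <;> simp [h]),
          Finset.prod_ite_mem, Finset.univ_inter]
      · rw [if_neg hF]
        push_neg at hF
        obtain ⟨i0, hi0F, hi0⟩ := hF
        have hz : (∏ i, (if ((i ∈ G → z i = x i) ∧ (i ∈ F → y i = z i))
            then (if i ∈ F then (1:ℝ) else marg1 P i (z i)) else 0)) = 0 :=
          Finset.prod_eq_zero (Finset.mem_univ i0)
            (by rw [if_neg]; intro hc; exact hi0 (hc.2 hi0F))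
        rw [hz, mul_zero, zero_mul]
    · rw [if_neg hG]
      push_neg at hG
      obtain ⟨i0, hi0G, hi0⟩ := hG
      symm
      apply Finset.sum_eq_zero
      intro y _
      have hz : (∏ i, (if ((i ∈ G → z i = x i) ∧ (i ∈ F → y i = z i))
          then (if i ∈ F then (1:ℝ) else marg1 P i (z i)) else 0)) = 0 :=
        Finset.prod_eq_zero (Finset.mem_univ i0)
          (by rw [if_neg]; intro hc; exact hi0 (hc.1 hi0G))
      rw [hz, mul_zero]
  rw [Finset.sum_congr rfl (fun z _ => step1 z), Finset.sum_comm]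
  have step2 : ∀ y ∈ P.support,
      (∑ z ∈ Fintype.piFinset D, P y * ∏ i, (if ((i ∈ G → z i = x i) ∧ (i ∈ F → y i = z i))
          then (if i ∈ F then 1 else marg1 P i (z i)) else 0))
      = P y * ((if (∀ i ∈ F ∩ G, y i = x i) then 1 else 0) * ∏ i ∈ G \ F, marg1 P i (x i)) := by
    intro y hy
    rw [← Finset.mul_sum]
    congr 1
    rw [← Finset.prod_univ_sum D (fun i a => if ((i ∈ G → a = x i) ∧ (i ∈ F → y i = a))
        then (if i ∈ F then (1:ℝ) else marg1 P i a) else 0)]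
    have ev : ∀ i : Fin n, (∑ a ∈ D i, if ((i ∈ G → a = x i) ∧ (i ∈ F → y i = a))
          then (if i ∈ F then (1:ℝ) else marg1 P i a) else 0)
        = (if i ∈ F ∩ G then (if y i = x i then (1:ℝ) else 0) else 1)
          * (if i ∈ G \ F then marg1 P i (x i) else 1) := by
      intro i
      by_cases hiF : i ∈ F <;> by_cases hiG : i ∈ G
      · have hcong : ∀ a ∈ D i, (if ((i ∈ G → a = x i) ∧ (i ∈ F → y i = a))
              then (if i ∈ F then (1:ℝ) else marg1 P i a) else 0)
            = (if a = y i then (if y i = x i then (1:ℝ) else 0) else 0) := by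
          intro a _
          by_cases hay : a = y i
          · by_cases hyx : y i = x i
            · simp [hiF, hiG, hay, hyx]
            · simp [hiF, hiG, hay, hyx]
          · rw [if_neg, if_neg hay]
            intro hc
            exact hay ((hc.2 hiF).symm)
        rw [Finset.sum_congr rfl hcong, Finset.sum_ite_eq' (D i) (y i) _, if_pos (hyD y hy i)]
        simp [Finset.mem_inter, Finset.mem_sdiff, hiF, hiG]
      · have hcong : ∀ a ∈ D i, (if ((i ∈ G → a = x i) ∧ (i ∈ F → y i = a))
              then (if i ∈ F then (1:ℝ) else marg1 P i a) else 0)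
            = (if a = y i then (1:ℝ) else 0) := by
          intro a _
          by_cases hay : a = y i
          · subst hay; simp [hiF, hiG]
          · rw [if_neg, if_neg hay]
            intro hc
            exact hay ((hc.2 hiF).symm)
        rw [Finset.sum_congr rfl hcong, Finset.sum_ite_eq' (D i) (y i) _, if_pos (hyD y hy i)]
        simp [Finset.mem_inter, Finset.mem_sdiff, hiF, hiG]
      · have hcong : ∀ a ∈ D i, (if ((i ∈ G → a = x i) ∧ (i ∈ F → y i = a))
              then (if i ∈ F then (1:ℝ) else marg1 P i a) else 0)
            = (if a = x i then marg1 P i a else 0) := by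
          intro a _
          by_cases hax : a = x i
          · simp [hiF, hiG, hax]
          · rw [if_neg, if_neg hax]
            intro hc
            exact hax (hc.1 hiG)
        rw [Finset.sum_congr rfl hcong, Finset.sum_ite_eq' (D i) (x i) (fun a => marg1 P i a)]
        have hfix : (if x i ∈ D i then marg1 P i (x i) else 0) = marg1 P i (x i) := by
          split
          · rfl
          · exact (hm1D i (x i) ‹_›).symm
        rw [hfix]
        simp [Finset.mem_inter, Finset.mem_sdiff, hiF, hiG]
      · have hcong : ∀ a ∈ D i, (if ((i ∈ G → a = x i) ∧ (i ∈ F → y i = a))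
              then (if i ∈ F then (1:ℝ) else marg1 P i a) else 0)
            = marg1 P i a := by
          intro a _
          rw [if_pos ⟨fun h => absurd h hiG, fun h => absurd h hiF⟩, if_neg hiF]
        rw [Finset.sum_congr rfl hcong, marg1_sum_one P hP i (hDP i)]
        simp [Finset.mem_inter, Finset.mem_sdiff, hiF, hiG]
    rw [Finset.prod_congr rfl (fun i _ => ev i), Finset.prod_mul_distrib]
    congr 1
    · rw [Finset.prod_ite_mem, Finset.univ_inter, Finset.prod_boole]
      by_cases hcnd : ∀ i ∈ F ∩ G, y i = x i
      · rw [if_pos hcnd, if_pos hcnd]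
      · rw [if_neg hcnd, if_neg hcnd]
    · rw [Finset.prod_ite_mem, Finset.univ_inter]
  rw [Finset.sum_congr rfl step2]
  rw [show margCoef P (F ∩ G) x
    = ∑ y ∈ P.support, if (∀ i ∈ F ∩ G, y i = x i) then P y else 0 from rfl, Finset.sum_mul]
  apply Finset.sum_congr rfl
  intro y _
  split <;> simp

end Machinery2
section Machinery3
open Finset

variable {n : ℕ} {X : Fin n → Type*} (P : (∀ i, X i) →₀ ℝ)

lemma pairTerm_apply (hP : dmTotal P = 1) (F : Finset (Fin n)) (x : ∀ i, X i) :
    pairTerm P (prodMarg1 P) F x = margCoef P F x * ∏ i ∈ Fᶜ, marg1 P i (x i) := by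
  rw [← margCoef_univ (pairTerm P (prodMarg1 P) F) x, margCoef_pairTerm P hP F Finset.univ x,
    Finset.inter_univ]
  congr 1

lemma genLanc_apply (hP : dmTotal P = 1) (k' : ℕ) (x : ∀ i, X i) :
    genLanc k' P (prodMarg1 P) x = P x + ∑ j ∈ Finset.range k',
      ((-1:ℝ)^(k'-j) * ((n-j-1).choose (n-k') : ℝ)) *
        ∑ F ∈ Finset.powersetCard j (Finset.univ : Finset (Fin n)),
          (margCoef P F x * ∏ i ∈ Fᶜ, marg1 P i (x i)) := by
  rw [genLanc, Finsupp.add_apply, Finsupp.finset_sum_apply]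
  congr 1
  apply Finset.sum_congr rfl
  intro j _
  rw [Finsupp.smul_apply, Finsupp.finset_sum_apply, smul_eq_mul]
  congr 1
  exact Finset.sum_congr rfl (fun F _ => pairTerm_apply P hP F x)

lemma genLanc_margCoef (hP : dmTotal P = 1) (k' : ℕ) (G : Finset (Fin n)) (x : ∀ i, X i) :
    margCoef (genLanc k' P (prodMarg1 P)) G x = margCoef P G x + ∑ j ∈ Finset.range k',
      ((-1:ℝ)^(k'-j) * ((n-j-1).choose (n-k') : ℝ)) *
        ∑ F ∈ Finset.powersetCard j (Finset.univ : Finset (Fin n)),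
          (margCoef P (F ∩ G) x * ∏ i ∈ G \ F, marg1 P i (x i)) := by
  rw [genLanc, margCoef_add, margCoef_finset_sum]
  congr 1
  apply Finset.sum_congr rfl
  intro j _
  rw [margCoef_smul, margCoef_finset_sum]
  congr 1
  exact Finset.sum_congr rfl (fun F _ => margCoef_pairTerm P hP F G x)

end Machinery3
/-- if `Λ_k^n[P] = 0` then `Λ_{k+1}^n[P] = 0`, for `1 ≤ k ≤ n−1`. -/
theorem statement4 {n : ℕ} {X : Fin n → Type*} (hne : ∀ i, Nonempty (X i))
    (k : ℕ) (hk : 1 ≤ k) (hkn : k ≤ n - 1) (P : (∀ i, X i) →₀ ℝ)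
    (hP : IsDiscProb P) (h : genLanc k P (prodMarg1 P) = 0) :
    genLanc (k + 1) P (prodMarg1 P) = 0 := by
  classical
  have hP1 : dmTotal P = 1 := hP.2
  have hn : k + 1 ≤ n := by
    rcases Nat.eq_zero_or_pos n with h0 | h0
    · omega
    · omega
  ext x
  rw [Finsupp.coe_zero, Pi.zero_apply, genLanc_apply P hP1 (k+1) x]
  have E1 : P x + ∑ j ∈ Finset.range k,
      ((-1:ℝ)^(k-j) * ((n-j-1).choose (n-k) : ℝ)) *
        ∑ F ∈ Finset.powersetCard j (Finset.univ : Finset (Fin n)),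
          (margCoef P F x * ∏ i ∈ Fᶜ, marg1 P i (x i)) = 0 := by
    have h0 : genLanc k P (prodMarg1 P) x = 0 := by rw [h]; rfl
    rwa [genLanc_apply P hP1 k x] at h0
  have STAR : ∀ G : Finset (Fin n),
      (margCoef P G x * ∏ i ∈ Gᶜ, marg1 P i (x i))
      = - ∑ j ∈ Finset.range k, ((-1:ℝ)^(k-j) * ((n-j-1).choose (n-k) : ℝ)) *
          ∑ F ∈ Finset.powersetCard j (Finset.univ : Finset (Fin n)),
            (margCoef P (F ∩ G) x * ∏ i ∈ (F ∩ G)ᶜ, marg1 P i (x i)) := by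
    intro G
    have h0 : margCoef (genLanc k P (prodMarg1 P)) G x = 0 := by
      rw [h]; exact margCoef_zero G x
    rw [genLanc_margCoef P hP1 k G x] at h0
    have key : ∀ F : Finset (Fin n),
        (∏ i ∈ G \ F, marg1 P i (x i)) * ∏ i ∈ Gᶜ, marg1 P i (x i)
          = ∏ i ∈ (F ∩ G)ᶜ, marg1 P i (x i) := by
      intro F
      rw [← Finset.prod_union (Finset.disjoint_left.2
        (fun i hi1 hi2 => (Finset.mem_compl.1 hi2) (Finset.mem_sdiff.1 hi1).1))]
      apply Finset.prod_congr _ (fun _ _ => rfl)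
      ext i
      simp only [Finset.mem_union, Finset.mem_sdiff, Finset.mem_compl, Finset.mem_inter]
      tauto
    have expand : ∀ j ∈ Finset.range k,
        ((-1:ℝ)^(k-j) * ((n-j-1).choose (n-k) : ℝ)) *
          ∑ F ∈ Finset.powersetCard j (Finset.univ : Finset (Fin n)),
            (margCoef P (F ∩ G) x * ∏ i ∈ (F ∩ G)ᶜ, marg1 P i (x i))
        = (((-1:ℝ)^(k-j) * ((n-j-1).choose (n-k) : ℝ)) *
            ∑ F ∈ Finset.powersetCard j (Finset.univ : Finset (Fin n)),
              (margCoef P (F ∩ G) x * ∏ i ∈ G \ F, marg1 P i (x i)))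
            * ∏ i ∈ Gᶜ, marg1 P i (x i) := by
      intro j _
      conv_rhs => rw [mul_assoc, Finset.sum_mul]
      congr 1
      apply Finset.sum_congr rfl
      intro F _
      rw [mul_assoc, key F]
    rw [Finset.sum_congr rfl expand, ← Finset.sum_mul]
    have hS : (∑ j ∈ Finset.range k, ((-1:ℝ)^(k-j) * ((n-j-1).choose (n-k) : ℝ)) *
        ∑ F ∈ Finset.powersetCard j (Finset.univ : Finset (Fin n)),
          (margCoef P (F ∩ G) x * ∏ i ∈ G \ F, marg1 P i (x i)))
        = - margCoef P G x := by linarith [h0]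
    rw [hS]
    ring
  have KEY : (∑ F ∈ Finset.powersetCard k (Finset.univ : Finset (Fin n)),
        (margCoef P F x * ∏ i ∈ Fᶜ, marg1 P i (x i)))
      = ∑ j ∈ Finset.range k,
          (((-1:ℝ)^(k+1-j) * ((n-j-1).choose (n-(k+1)) : ℝ))
            - ((-1:ℝ)^(k-j) * ((n-j-1).choose (n-k) : ℝ))) *
          ∑ F ∈ Finset.powersetCard j (Finset.univ : Finset (Fin n)),
            (margCoef P F x * ∏ i ∈ Fᶜ, marg1 P i (x i)) := by
    rw [Finset.sum_congr rfl (fun G _ => STAR G), Finset.sum_neg_distrib, Finset.sum_comm]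
    have swap2 : ∀ j ∈ Finset.range k,
        (∑ G ∈ Finset.powersetCard k (Finset.univ : Finset (Fin n)),
          ((-1:ℝ)^(k-j) * ((n-j-1).choose (n-k) : ℝ)) *
            ∑ F ∈ Finset.powersetCard j (Finset.univ : Finset (Fin n)),
              (margCoef P (F ∩ G) x * ∏ i ∈ (F ∩ G)ᶜ, marg1 P i (x i)))
        = ((-1:ℝ)^(k-j) * ((n-j-1).choose (n-k) : ℝ)) *
            ∑ F ∈ Finset.powersetCard j (Finset.univ : Finset (Fin n)),
              ∑ G ∈ Finset.powersetCard k (Finset.univ : Finset (Fin n)),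
                (margCoef P (F ∩ G) x * ∏ i ∈ (F ∩ G)ᶜ, marg1 P i (x i)) := by
      intro j _
      rw [← Finset.mul_sum, Finset.sum_comm]
    rw [Finset.sum_congr rfl swap2]
    exact core k hk hn (fun E => margCoef P E x * ∏ i ∈ Eᶜ, marg1 P i (x i))
  rw [Finset.sum_range_succ, KEY,
    show k+1-k = 1 from by omega, pow_one,
    show (((n-k-1).choose (n-(k+1))) : ℝ) = 1 from by
      rw [show n-(k+1) = n-k-1 from by omega, Nat.choose_self]; norm_num]
  have split : ∑ j ∈ Finset.range k,
      ((((-1:ℝ)^(k+1-j) * ((n-j-1).choose (n-(k+1)) : ℝ))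
        - ((-1:ℝ)^(k-j) * ((n-j-1).choose (n-k) : ℝ))) *
        ∑ F ∈ Finset.powersetCard j (Finset.univ : Finset (Fin n)),
          (margCoef P F x * ∏ i ∈ Fᶜ, marg1 P i (x i)))
      = (∑ j ∈ Finset.range k, ((-1:ℝ)^(k+1-j) * ((n-j-1).choose (n-(k+1)) : ℝ)) *
          ∑ F ∈ Finset.powersetCard j (Finset.univ : Finset (Fin n)),
            (margCoef P F x * ∏ i ∈ Fᶜ, marg1 P i (x i)))
        - ∑ j ∈ Finset.range k, ((-1:ℝ)^(k-j) * ((n-j-1).choose (n-k) : ℝ)) *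
          ∑ F ∈ Finset.powersetCard j (Finset.univ : Finset (Fin n)),
            (margCoef P F x * ∏ i ∈ Fᶜ, marg1 P i (x i)) := by
    rw [← Finset.sum_sub_distrib]
    exact Finset.sum_congr rfl (fun j _ => by ring)
  rw [split]
  linarith [E1]

end IndepRBF
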